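/- Let A be a ring, M an A-module generator, Γ = End_A(M)^op. The functor Hom_A(M, -) restricts to an equivalence between add M (the category of direct summands of finite direct sums of copies of M) and the category of finitely generated projective left Γ-modules. -/

import Mathlib

/-!
STATEMENT 5: For a ring `A`, a generator `M` and `Γ = End_A(M)^op`, the functor
`Hom_A(M, -)` restricts to an equivalence `add M ≃ Γ-proj` between the
category of direct summands of finite direct sums of copies of `M` and the
category of finitely generated projective left `Γ`-modules.

The left `Γ`-module structure on `Hom_A(M,X)` is `(op γ) • h = h ∘ γ`.
The equivalence is expressed by three statements:
* (well-definedness) for `X ∈ add M`, `Hom_A(M,X)` is a finitely generated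
  projective `Γ`-module;
* (full faithfulness) every `Γ`-linear map `Hom_A(M,X) → Hom_A(M,Y)` for
  `X, Y ∈ add M` is `g ∘ -` for a unique `A`-linear `g : X → Y`;
* (essential surjectivity) every finitely generated projective `Γ`-module is
  `Γ`-isomorphic to `Hom_A(M,X)` for some direct summand `X` of some `M^n`.
-/

section

variable (A : Type*) [Ring A] (M : Type*) [AddCommGroup M] [Module A M]

/-- `X` belongs to `add M`: it is a direct summand of `M^n` for some `n`. -/
def InAddM (X : Type*) [AddCommGroup X] [Module A X] : Prop :=
  ∃ (n : ℕ) (i : X →ₗ[A] (Fin n → M)) (p : (Fin n → M) →ₗ[A] X),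
    p.comp i = LinearMap.id

variable {A M} in
/-- The left `Γ = End_A(M)ᵒᵖ`-module structure on `Hom_A(M, X)`:
`(op γ) • h = h ∘ γ`. -/
instance instHomModule (X : Type*) [AddCommGroup X] [Module A X] :
    Module (Module.End A M)ᵐᵒᵖ (M →ₗ[A] X) where
  smul γ h := h.comp γ.unop
  one_smul h := by ext m; rfl
  mul_smul γ δ h := by ext m; rfl
  smul_zero γ := by ext m; rfl
  smul_add γ h h' := by ext m; rfl
  add_smul γ δ h := by
    ext m
    show h ((γ + δ).unop m) = h (γ.unop m) + h (δ.unop m)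
    rw [MulOpposite.unop_add, LinearMap.add_apply, map_add]
  zero_smul h := by
    ext m
    show h ((0 : (Module.End A M)ᵐᵒᵖ).unop m) = 0
    rw [MulOpposite.unop_zero, LinearMap.zero_apply, map_zero]

end

/-!
Put `Γ = End_A(M)ᵒᵖ`. Since `M` is a generator there are `fⱼ : M → A` and `eⱼ ∈ M` with
`∑ fⱼ(eⱼ) = 1`, so every `x ∈ X` equals `∑ (fⱼ(-) • x)(eⱼ)` and lies in the images of maps
`M → X`. Hence `Hom_A(M, -)` is faithful, and a `Γ`-linear `F : Hom_A(M, X) → Hom_A(M, Y)` is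
postcomposition with `x ↦ ∑ F(fⱼ(-) • x)(eⱼ)`. The functor sends `M^n` to `Γ^n`, hence `add M`
to f.g. projectives. Conversely a f.g. projective `P` splits an idempotent of
`Γ^k ≅ Hom_A(M, M^k)`; by full faithfulness this idempotent is postcomposition with an
idempotent `G` of `M^k`, and `P ≅ Hom_A(M, range G)` because both split the same idempotent.
-/

open LinearMap

def LinearEquiv.ofRetractsOfCompEq {R : Type*} [Semiring R] {P Q S : Type*}
    [AddCommMonoid P] [Module R P] [AddCommMonoid Q] [Module R Q] [AddCommMonoid S] [Module R S]
    (s : P →ₗ[R] Q) (π : Q →ₗ[R] P) (t : S →ₗ[R] Q) (ρ : Q →ₗ[R] S)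
    (hs : π ∘ₗ s = LinearMap.id) (ht : ρ ∘ₗ t = LinearMap.id) (h : s ∘ₗ π = t ∘ₗ ρ) : P ≃ₗ[R] S :=
  LinearEquiv.ofLinearMap (ρ ∘ₗ s) (π ∘ₗ t)
    (by rw [comp_assoc, ← comp_assoc t π s, h, comp_assoc, ht, comp_id, ht])
    (by rw [comp_assoc, ← comp_assoc s ρ t, ← h, comp_assoc, hs, comp_id, hs])

theorem IsIdempotentElem.rangeRestrict_comp_subtype {R E : Type*} [Semiring R]
    [AddCommMonoid E] [Module R E] {G : E →ₗ[R] E} (hG : IsIdempotentElem G) :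
    G.rangeRestrict ∘ₗ (range G).subtype = LinearMap.id := by
  ext ⟨_, y, rfl⟩
  exact congr($hG y)

section SMulRight

variable {R N X Y : Type*} [Semiring R] [AddCommMonoid N] [Module R N]
  [AddCommMonoid X] [Module R X] [AddCommMonoid Y] [Module R Y]

theorem LinearMap.smulRight_add (φ : N →ₗ[R] R) (x y : X) :
    φ.smulRight (x + y) = φ.smulRight x + φ.smulRight y := by
  ext n
  simp only [smulRight_apply, smul_add, add_apply]

theorem LinearMap.comp_smulRight (h : X →ₗ[R] Y) (φ : N →ₗ[R] R) (x : X) :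
    h ∘ₗ φ.smulRight x = φ.smulRight (h x) := by
  ext n
  simp only [comp_apply, smulRight_apply, map_smul]

end SMulRight

section HomFunctor

variable {A : Type*} [Ring A] {M : Type*} [AddCommGroup M] [Module A M]
  {X Y Z : Type*} [AddCommGroup X] [Module A X] [AddCommGroup Y] [Module A Y]
  [AddCommGroup Z] [Module A Z]

local notation "Γ" => (Module.End A M)ᵐᵒᵖ

theorem op_smul_eq_comp (γ : Module.End A M) (h : M →ₗ[A] X) :
    MulOpposite.op γ • h = h ∘ₗ γ :=
  rfl

variable (M) in
def postcomp (g : X →ₗ[A] Y) : (M →ₗ[A] X) →ₗ[Γ] (M →ₗ[A] Y) where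
  toFun h := g ∘ₗ h
  map_add' _ _ := comp_add _ _ g
  map_smul' _ _ := rfl

theorem postcomp_comp (g : Y →ₗ[A] Z) (f : X →ₗ[A] Y) :
    postcomp M (g ∘ₗ f) = postcomp M g ∘ₗ postcomp M f :=
  rfl

variable (X) in
theorem postcomp_id : postcomp M (LinearMap.id : X →ₗ[A] X) = LinearMap.id :=
  rfl

theorem postcomp_comp_postcomp_eq_id {i : X →ₗ[A] Y} {p : Y →ₗ[A] X}
    (hpi : p ∘ₗ i = LinearMap.id) :
    postcomp M p ∘ₗ postcomp M i = LinearMap.id := by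
  rw [← postcomp_comp, hpi, postcomp_id]

variable (A M) in
def piEquivHomPi (ι : Type*) : (ι → Γ) ≃ₗ[Γ] (M →ₗ[A] (ι → M)) where
  toFun v := pi fun j => (v j).unop
  invFun h j := MulOpposite.op (proj j ∘ₗ h)
  map_add' _ _ := rfl
  map_smul' _ _ := rfl
  left_inv _ := rfl
  right_inv _ := rfl

instance (ι : Type*) [Finite ι] : Module.Projective Γ (M →ₗ[A] (ι → M)) :=
  .of_equiv (piEquivHomPi A M ι)

instance (ι : Type*) [Finite ι] : Module.Finite Γ (M →ₗ[A] (ι → M)) :=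
  .equiv (piEquivHomPi A M ι)

theorem projective_hom_of_retract [Module.Projective Γ (M →ₗ[A] Y)] (i : X →ₗ[A] Y)
    (p : Y →ₗ[A] X) (hpi : p ∘ₗ i = LinearMap.id) : Module.Projective Γ (M →ₗ[A] X) :=
  .of_split (postcomp M i) (postcomp M p) (postcomp_comp_postcomp_eq_id hpi)

theorem finite_hom_of_retract [Module.Finite Γ (M →ₗ[A] Y)] (i : X →ₗ[A] Y)
    (p : Y →ₗ[A] X) (hpi : p ∘ₗ i = LinearMap.id) : Module.Finite Γ (M →ₗ[A] X) :=
  .of_surjective (postcomp M p)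
    (Function.LeftInverse.surjective (g := postcomp M i) fun h =>
      congr($(postcomp_comp_postcomp_eq_id (M := M) hpi) h))

end HomFunctor

section Generator

variable {A : Type*} [Ring A] {M : Type*} [AddCommGroup M] [Module A M]
  {X Y : Type*} [AddCommGroup X] [Module A X] [AddCommGroup Y] [Module A Y]
  {ι : Type*} [Fintype ι] {f : ι → M →ₗ[A] A} {e : ι → M}

local notation "Γ" => (Module.End A M)ᵐᵒᵖ

theorem exists_sum_apply_eq_one_of_retract [DecidableEq ι] (i : A →ₗ[A] (ι → M))
    (p : (ι → M) →ₗ[A] A) (hpi : p ∘ₗ i = LinearMap.id) :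
    ∃ (f : ι → M →ₗ[A] A) (e : ι → M), ∑ j, f j (e j) = 1 := by
  refine ⟨fun j => p ∘ₗ single A (fun _ => M) j, fun j => i 1 j, ?_⟩
  simp only [comp_apply, ← map_sum, coe_single, Finset.univ_sum_single]
  exact congr($hpi 1)

theorem sum_smulRight_apply_smul (hfe : ∑ j, f j (e j) = 1) (x : X) (a : A) :
    ∑ j, (f j).smulRight x (a • e j) = a • x := by
  simp only [smulRight_apply, map_smul, ← Finset.smul_sum, ← Finset.sum_smul, hfe, one_smul]

theorem LinearMap.ext_of_forall_comp_eq (hfe : ∑ j, f j (e j) = 1) {g g' : X →ₗ[A] Y}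
    (h : ∀ h : M →ₗ[A] X, g ∘ₗ h = g' ∘ₗ h) : g = g' := by
  ext x
  rw [← one_smul A x, ← sum_smulRight_apply_smul hfe]
  simp only [map_sum, ← comp_apply, h]

variable (f e) in
def descendAddHom (F : (M →ₗ[A] X) →ₗ[Γ] (M →ₗ[A] Y)) : X →+ Y where
  toFun x := ∑ j, F ((f j).smulRight x) (e j)
  map_zero' := by simp
  map_add' x y := by simp [smulRight_add, Finset.sum_add_distrib]

theorem descendAddHom_apply_apply (hfe : ∑ j, f j (e j) = 1)
    (F : (M →ₗ[A] X) →ₗ[Γ] (M →ₗ[A] Y)) (h : M →ₗ[A] X) (m : M) :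
    descendAddHom f e F (h m) = F h m := by
  simp only [descendAddHom, AddMonoidHom.coe_mk, ZeroHom.coe_mk, ← comp_smulRight,
    ← op_smul_eq_comp, map_smul]
  simp only [op_smul_eq_comp, comp_apply, smulRight_apply, ← map_sum, ← Finset.sum_smul, hfe,
    one_smul]

def descend (hfe : ∑ j, f j (e j) = 1) (F : (M →ₗ[A] X) →ₗ[Γ] (M →ₗ[A] Y)) :
    X →ₗ[A] Y where
  __ := descendAddHom f e F
  map_smul' a x := by
    change descendAddHom f e F (a • x) = a • descendAddHom f e F x
    rw [← sum_smulRight_apply_smul hfe x a, map_sum]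
    simp only [descendAddHom_apply_apply hfe]
    simp only [map_smul, ← Finset.smul_sum]
    rfl

theorem descend_comp (hfe : ∑ j, f j (e j) = 1) (F : (M →ₗ[A] X) →ₗ[Γ] (M →ₗ[A] Y))
    (h : M →ₗ[A] X) : descend hfe F ∘ₗ h = F h :=
  LinearMap.ext (descendAddHom_apply_apply hfe F h)

theorem postcomp_bijective (hfe : ∑ j, f j (e j) = 1) :
    Function.Bijective (postcomp M : (X →ₗ[A] Y) → (M →ₗ[A] X) →ₗ[Γ] (M →ₗ[A] Y)) :=
  ⟨fun _ _ hgg' => LinearMap.ext_of_forall_comp_eq hfe fun h => congr($hgg' h),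
    fun F => ⟨descend hfe F, LinearMap.ext (descend_comp hfe F)⟩⟩

end Generator

section EssentialSurjectivity

variable {A : Type*} [Ring A] {M : Type*} [AddCommGroup M] [Module A M]
  {ι : Type*} [Fintype ι] {f : ι → M →ₗ[A] A} {e : ι → M}

local notation "Γ" => (Module.End A M)ᵐᵒᵖ

theorem exists_isCompl_nonempty_equiv_hom (hfe : ∑ j, f j (e j) = 1) (P : Type*)
    [AddCommGroup P] [Module Γ P] [Module.Finite Γ P] [Module.Projective Γ P] :
    ∃ (n : ℕ) (X : Submodule A (Fin n → M)) (c : Submodule A (Fin n → M)),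
      IsCompl X c ∧ Nonempty (P ≃ₗ[Γ] (M →ₗ[A] X)) := by
  obtain ⟨n, π₀, hπ₀⟩ := Module.Finite.exists_fin' Γ P
  obtain ⟨s₀, hs₀⟩ := Module.projective_lifting_property π₀ LinearMap.id hπ₀
  let s := (piEquivHomPi A M (Fin n)).toLinearMap ∘ₗ s₀
  let π := π₀ ∘ₗ (piEquivHomPi A M (Fin n)).symm.toLinearMap
  have hπs : π ∘ₗ s = LinearMap.id := by
    ext q
    simpa [s, π] using congr($hs₀ q)
  obtain ⟨G, hG⟩ := (postcomp_bijective hfe).surjective (s ∘ₗ π)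
  have hGG : IsIdempotentElem G := (postcomp_bijective hfe).injective <| by
    rw [Module.End.mul_eq_comp, postcomp_comp, hG, comp_assoc, ← comp_assoc π s π, hπs, id_comp]
  refine ⟨n, range G, ker G, hGG.isCompl, ⟨LinearEquiv.ofRetractsOfCompEq s π
    (postcomp M (range G).subtype) (postcomp M G.rangeRestrict) hπs ?_ ?_⟩⟩
  · rw [← postcomp_comp, hGG.rangeRestrict_comp_subtype, postcomp_id]
  · exact hG.symm

end EssentialSurjectivity

theorem stmt5 (A : Type u_1) [Ring A] (M : Type u_1) [AddCommGroup M] [Module A M]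
    (hgen : ∃ (n : ℕ) (i : A →ₗ[A] (Fin n → M)) (p : (Fin n → M) →ₗ[A] A),
      p.comp i = LinearMap.id) :
    -- `Hom_A(M,-)` sends `add M` into f.g. projective `Γ`-modules
    (∀ (X : Type u_1) [AddCommGroup X] [Module A X], InAddM A M X →
      Module.Finite (Module.End A M)ᵐᵒᵖ (M →ₗ[A] X) ∧
      Module.Projective (Module.End A M)ᵐᵒᵖ (M →ₗ[A] X)) ∧
    -- full faithfulness on `add M`
    (∀ (X Y : Type u_1) [AddCommGroup X] [Module A X] [AddCommGroup Y] [Module A Y],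
      InAddM A M X → InAddM A M Y →
      ∀ F : (M →ₗ[A] X) →ₗ[(Module.End A M)ᵐᵒᵖ] (M →ₗ[A] Y),
        ∃! g : X →ₗ[A] Y, ∀ h : M →ₗ[A] X, F h = g.comp h) ∧
    -- essential surjectivity onto f.g. projective `Γ`-modules
    (∀ (P : Type u_1) [AddCommGroup P] [Module (Module.End A M)ᵐᵒᵖ P],
      Module.Finite (Module.End A M)ᵐᵒᵖ P →
      Module.Projective (Module.End A M)ᵐᵒᵖ P →
      ∃ (n : ℕ) (X : Submodule A (Fin n → M)) (c : Submodule A (Fin n → M)),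
        IsCompl X c ∧
        Nonempty (P ≃ₗ[(Module.End A M)ᵐᵒᵖ] (M →ₗ[A] X))) := by
  obtain ⟨n, i, p, hpi⟩ := hgen
  obtain ⟨f, e, hfe⟩ := exists_sum_apply_eq_one_of_retract i p hpi
  refine ⟨fun X _ _ ⟨k, iX, pX, hX⟩ =>
      ⟨finite_hom_of_retract iX pX hX, projective_hom_of_retract iX pX hX⟩,
    fun X Y _ _ _ _ _ _ F => ?_, fun P _ _ _ _ => exists_isCompl_nonempty_equiv_hom hfe P⟩
  refine (existsUnique_congr fun g => ?_).mp ((postcomp_bijective hfe).existsUnique F)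
  rw [LinearMap.ext_iff]
  exact forall_congr' fun h => eq_comm
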